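/- For every natural number N ≥ 1, (q;q)_N = ∑_{n=1}^{N+1} [N+1 choose n] (-1)^{n-1} n q^{n(n-1)/2}, where [N+1 choose n] is the Gaussian binomial coefficient. -/

import Mathlib

/-! Differentiate Cauchy's q-binomial theorem
`(x;q)_M = ∑ₙ [M choose n] (-1)^n q^(n choose 2) x^n` with `M = N + 1` at `x = 1`.
On the left only the factor `1 - x` vanishes at `x = 1`, so the derivative there is
`-(q;q)_N`; on the right it is `∑ₙ [N+1 choose n] (-1)^n n q^(n choose 2)`. -/

open Finset

/-- q-Pochhammer symbol (a;q)_n = ∏_{k=0}^{n-1} (1 - a q^k). -/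
noncomputable def qP (a q : ℂ) (n : ℕ) : ℂ := ∏ k ∈ Finset.range n, (1 - a * q ^ k)

/-- Gaussian (q-)binomial coefficient [N choose n]_q. -/
noncomputable def qBinom (q : ℂ) (N n : ℕ) : ℂ := qP q q N / (qP q q n * qP q q (N - n))

open Polynomial

lemma pow_succ_ne_one_of_norm_lt_one {q : ℂ} (hq : ‖q‖ < 1) (k : ℕ) : q ^ (k + 1) ≠ 1 := by
  intro h
  have : ‖q‖ ^ (k + 1) < 1 := pow_lt_one₀ (norm_nonneg q) hq k.succ_ne_zero
  rw [← norm_pow, h, norm_one] at this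
  exact this.false

lemma one_sub_mul_pow_ne_zero {q : ℂ} (hq : ∀ k, q ^ (k + 1) ≠ 1) (k : ℕ) :
    1 - q * q ^ k ≠ 0 := by
  rw [← pow_succ']
  exact sub_ne_zero.mpr (hq k).symm

lemma qP_zero (a q : ℂ) : qP a q 0 = 1 := prod_range_zero _

lemma qP_succ (a q : ℂ) (n : ℕ) : qP a q (n + 1) = qP a q n * (1 - a * q ^ n) :=
  prod_range_succ _ _

lemma qP_ne_zero {q : ℂ} (hq : ∀ k, q ^ (k + 1) ≠ 1) (n : ℕ) : qP q q n ≠ 0 :=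
  prod_ne_zero_iff.mpr fun k _ => one_sub_mul_pow_ne_zero hq k

lemma qBinom_zero_right {q : ℂ} (hq : ∀ k, q ^ (k + 1) ≠ 1) (M : ℕ) : qBinom q M 0 = 1 := by
  rw [qBinom, qP_zero, Nat.sub_zero, one_mul, div_self (qP_ne_zero hq M)]

lemma qBinom_self {q : ℂ} (hq : ∀ k, q ^ (k + 1) ≠ 1) (M : ℕ) : qBinom q M M = 1 := by
  rw [qBinom, Nat.sub_self, qP_zero, mul_one, div_self (qP_ne_zero hq M)]

lemma qBinom_succ_succ {q : ℂ} (hq : ∀ k, q ^ (k + 1) ≠ 1) {M n : ℕ} (hn : n < M) :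
    qBinom q (M + 1) (n + 1) = q ^ (n + 1) * qBinom q M (n + 1) + qBinom q M n := by
  obtain ⟨j, rfl⟩ : ∃ j, M = n + 1 + j := ⟨M - (n + 1), by omega⟩
  rw [qBinom, qBinom, qBinom, show n + 1 + j + 1 - (n + 1) = j + 1 by omega,
    show n + 1 + j - (n + 1) = j by omega, show n + 1 + j - n = j + 1 by omega,
    qP_succ q q (n + 1 + j), qP_succ q q j, qP_succ q q n]
  have := qP_ne_zero hq n
  have := qP_ne_zero hq j
  have := qP_ne_zero hq (n + 1 + j)
  have := one_sub_mul_pow_ne_zero hq n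
  have := one_sub_mul_pow_ne_zero hq j
  field_simp
  ring

lemma sum_range_mul_pow_eq_one_sub_mul {R : Type*} [CommRing R] (M : ℕ) (t c : ℕ → R) (x : R)
    (h0 : c 0 = t 0) (hmid : ∀ n < M, c (n + 1) = t (n + 1) - t n) (htop : c (M + 1) = -t M) :
    ∑ n ∈ range (M + 2), c n * x ^ n = (1 - x) * ∑ n ∈ range (M + 1), t n * x ^ n := by
  have hmid_sum : ∑ n ∈ range M, c (n + 1) * x ^ (n + 1)
      = ∑ n ∈ range M, (t (n + 1) * x ^ (n + 1) - x * (t n * x ^ n)) :=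
    sum_congr rfl fun n hn => by rw [hmid n (mem_range.mp hn)]; ring
  rw [sub_mul, one_mul, mul_sum, sum_range_succ' _ (M + 1), sum_range_succ _ M, hmid_sum,
    sum_sub_distrib, htop, sum_range_succ' _ M, sum_range_succ (fun n => x * (t n * x ^ n)) M,
    h0]
  ring

theorem qP_eq_sum_qBinom {q : ℂ} (hq : ∀ k, q ^ (k + 1) ≠ 1) (M : ℕ) (x : ℂ) :
    qP x q M = ∑ n ∈ range (M + 1), qBinom q M n * (-1) ^ n * q ^ n.choose 2 * x ^ n := by
  rw [qP]
  induction M generalizing x with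
  | zero => simp [qBinom_zero_right hq]
  | succ M ih =>
    -- `(x;q)_{M+1} = (1 - x) (xq;q)_M`; comparing coefficients is then q-Pascal's rule.
    have hshift : ∏ k ∈ range (M + 1), (1 - x * q ^ k)
        = (1 - x) * ∏ k ∈ range M, (1 - x * q * q ^ k) := by
      rw [prod_range_succ', mul_comm, pow_zero, mul_one]
      simp only [pow_succ', mul_assoc]
    have hchoose (n : ℕ) : (n + 1).choose 2 = n + n.choose 2 := by
      rw [Nat.choose_succ_succ, Nat.choose_one_right]
    rw [hshift, ih]
    simp only [mul_pow _ q, ← mul_assoc, mul_right_comm _ (x ^ _) (q ^ _)]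
    refine (sum_range_mul_pow_eq_one_sub_mul M _ _ x ?_ ?_ ?_).symm
    · simp [qBinom_zero_right hq]
    · intro n hn
      rw [hchoose, qBinom_succ_succ hq hn]
      ring
    · rw [hchoose, qBinom_self hq, qBinom_self hq]
      ring

lemma prod_one_sub_C_mul_X_eq_sum {q : ℂ} (hq : ∀ k, q ^ (k + 1) ≠ 1) (M : ℕ) :
    ∏ k ∈ range M, (1 - C (q ^ k) * X) =
      ∑ n ∈ range (M + 1), C (qBinom q M n * (-1) ^ n * q ^ n.choose 2) * X ^ n := by
  refine Polynomial.funext fun x => ?_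
  simp only [eval_prod, eval_finsetSum, eval_sub, eval_one, eval_mul, eval_C, eval_X, eval_pow]
  simp only [mul_comm _ x]
  exact qP_eq_sum_qBinom hq M x

lemma eval_one_derivative_prod_one_sub_C_mul_X (q : ℂ) (N : ℕ) :
    eval 1 (derivative (∏ k ∈ range (N + 1), (1 - C (q ^ k) * X))) = -qP q q N := by
  rw [prod_range_succ', derivative_mul]
  simp [qP, eval_prod, pow_succ']

lemma eval_one_derivative_sum_C_mul_X_pow {R : Type*} [CommSemiring R] (s : Finset ℕ)
    (a : ℕ → R) : eval 1 (derivative (∑ n ∈ s, C (a n) * X ^ n)) = ∑ n ∈ s, a n * n := by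
  simp [eval_finsetSum, derivative_X_pow]

lemma sum_range_qBinom_mul_nat {q : ℂ} (hq : ∀ k, q ^ (k + 1) ≠ 1) (N : ℕ) :
    ∑ n ∈ range (N + 2), qBinom q (N + 1) n * (-1) ^ n * q ^ n.choose 2 * n = -qP q q N := by
  rw [← eval_one_derivative_sum_C_mul_X_pow, ← prod_one_sub_C_mul_X_eq_sum hq,
    eval_one_derivative_prod_one_sub_C_mul_X]

theorem stmt_5_general (N : ℕ) (q : ℂ) (hq : ‖q‖ < 1) :
    qP q q N =
      ∑ n ∈ Finset.Icc 1 (N + 1),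
        qBinom q (N + 1) n * ((-1) ^ (n - 1) * (n : ℂ) * q ^ (n * (n - 1) / 2)) := by
  have h := sum_range_qBinom_mul_nat (pow_succ_ne_one_of_norm_lt_one hq) N
  rw [sum_range_succ', Nat.cast_zero, mul_zero, add_zero] at h
  rw [← Finset.Ico_add_one_right_eq_Icc, sum_Ico_eq_sum_range, Nat.add_sub_cancel, ← neg_neg (qP q q N), ← h, ← sum_neg_distrib]
  refine sum_congr rfl fun m _ => ?_
  simp only [add_comm 1 m, Nat.add_sub_cancel, Nat.choose_two_right, pow_succ]
  ring

theorem stmt_5 (N : ℕ) (hN : 1 ≤ N) (q : ℂ) (hq : ‖q‖ < 1) :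
    qP q q N =
      ∑ n ∈ Finset.Icc 1 (N + 1),
        qBinom q (N + 1) n * ((-1) ^ (n - 1) * (n : ℂ) * q ^ (n * (n - 1) / 2)) :=
  stmt_5_general N q hq
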